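/- arXiv:2106.02971 — 2 statements merged into one kernel-verified Lean document; each statement's English description precedes it below -/
import Mathlib

section
/- Angle lemma: let 𝓛 be a self-adjoint operator on a real Hilbert space with unit eigenvector e₁ of eigenvalue μ₁, and assume a spectral gap: ⟨𝓛w, w⟩ ≥ μ⊥ ‖w‖² for all w orthogonal to e₁, with μ⊥ > μ₁. Let f be a unit vector and define β ∈ [0,π] by cos β = ⟨f, e₁⟩. Then for every v with ⟨v, f⟩ = 0 one has ⟨𝓛v, v⟩ ≥ (μ⊥ − (μ⊥ − μ₁) sin²β) ‖v‖². -/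
open scoped RealInnerProductSpace

/-- **Angle lemma.** Let `L` be a self-adjoint operator on a real Hilbert space with
unit eigenvector `e₁` of eigenvalue `μ₁`, and assume a spectral gap: `⟪Lw, w⟫ ≥ μperp‖w‖²`
for all `w ⟂ e₁`, with `μperp > μ₁`.  Let `f` be a unit vector and `β ∈ [0,π]` with
`cos β = ⟪f, e₁⟫`.  Then for every `v` with `⟪v, f⟫ = 0`,
`⟪Lv, v⟫ ≥ (μperp − (μperp − μ₁) sin²β)‖v‖²`. -/
theorem angle_lemma {E : Type*} [NormedAddCommGroup E] [InnerProductSpace ℝ E]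
    (L : E →ₗ[ℝ] E) (hsym : ∀ x y : E, ⟪L x, y⟫ = ⟪x, L y⟫)
    (μ₁ μperp : ℝ) (hμ : μ₁ < μperp)
    (e₁ : E) (he₁ : ‖e₁‖ = 1) (heig : L e₁ = μ₁ • e₁)
    (hgap : ∀ w : E, ⟪w, e₁⟫ = 0 → μperp * ‖w‖ ^ 2 ≤ ⟪L w, w⟫)
    (f : E) (hf : ‖f‖ = 1)
    (β : ℝ) (hβ₀ : 0 ≤ β) (hβπ : β ≤ Real.pi) (hcos : Real.cos β = ⟪f, e₁⟫)
    (v : E) (hv : ⟪v, f⟫ = 0) :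
    (μperp - (μperp - μ₁) * Real.sin β ^ 2) * ‖v‖ ^ 2 ≤ ⟪L v, v⟫ := by
  set a : ℝ := ⟪v, e₁⟫ with ha
  set w : E := v - a • e₁ with hwdef
  have hee : ⟪e₁, e₁⟫ = (1:ℝ) := by
    rw [real_inner_self_eq_norm_sq, he₁]; norm_num
  have hwe : ⟪w, e₁⟫ = 0 := by
    rw [hwdef, inner_sub_left, real_inner_smul_left, hee]; ring
  have hew : ⟪e₁, w⟫ = 0 := by rw [real_inner_comm]; exact hwe
  have hvw : v = w + a • e₁ := by rw [hwdef]; abel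
  have hnorm : ‖v‖ ^ 2 = ‖w‖ ^ 2 + a ^ 2 := by
    have h : ⟪v, v⟫ = ‖w‖ ^ 2 + a ^ 2 := by
      rw [hvw]
      simp only [inner_add_add_self, real_inner_smul_left, real_inner_smul_right, hee,
        hew, hwe, ← real_inner_self_eq_norm_sq]
      ring
    rw [← real_inner_self_eq_norm_sq, h]
  have hLweq : ⟪L w, e₁⟫ = 0 := by
    rw [hsym, heig, real_inner_smul_right, hwe]; ring
  have hLew : ⟪w, L e₁⟫ = 0 := by rw [← hsym]; exact hLweq
  have hLvv : ⟪L v, v⟫ = ⟪L w, w⟫ + μ₁ * a ^ 2 := by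
    rw [hvw, map_add, map_smul, heig]
    simp only [inner_add_left, inner_add_right, real_inner_smul_left, real_inner_smul_right,
      hee, hew, hwe, hLweq, hLew]
    ring
  have hsin : Real.sin β ≥ 0 := Real.sin_nonneg_of_nonneg_of_le_pi hβ₀ hβπ
  have hg : ‖e₁ - Real.cos β • f‖ = Real.sin β := by
    have h1 : ‖e₁ - Real.cos β • f‖ ^ 2 = Real.sin β ^ 2 := by
      rw [norm_sub_sq_real, real_inner_smul_right, norm_smul, real_inner_comm, ← hcos,
        he₁, hf]
      have hsc := Real.sin_sq_add_cos_sq β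
      simp only [Real.norm_eq_abs, mul_pow, sq_abs, mul_one, one_pow]
      nlinarith
    nlinarith [norm_nonneg (e₁ - Real.cos β • f)]
  have haeq : a = ⟪v, e₁ - Real.cos β • f⟫ := by
    rw [inner_sub_right, real_inner_smul_right, hv]; ring
  have habs : |a| ≤ ‖v‖ * Real.sin β := by
    rw [haeq, ← hg]
    exact abs_real_inner_le_norm v _
  have ha2 : a ^ 2 ≤ Real.sin β ^ 2 * ‖v‖ ^ 2 := by
    nlinarith [abs_nonneg a, sq_abs a, norm_nonneg v]
  have hgapw := hgap w hwe
  rw [hLvv]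
  have hkey : (μperp - μ₁) * a ^ 2 ≤ (μperp - μ₁) * (Real.sin β ^ 2 * ‖v‖ ^ 2) :=
    mul_le_mul_of_nonneg_left ha2 (by linarith)
  have h1 : μperp * ‖w‖ ^ 2 = μperp * ‖v‖ ^ 2 - μperp * a ^ 2 := by
    have : ‖w‖ ^ 2 = ‖v‖ ^ 2 - a ^ 2 := by linarith
    rw [this]; ring
  linarith [hgapw, hkey, h1]
end

section
/- Tempered time-decay bound from local smoothing and uniform spatial decay: let v : ℝ × ℝ → ℝ be measurable and suppose (i) M := sup over unit intervals I ⊂ ℝ of ∫_{t∈ℝ} ∫_{y∈I} v(y,t)² dy dt < ∞, and (ii) there is C > 0 such that for every y₀ ≥ 1 and every t ∈ ℝ, ∫_{|y|≥y₀} v(y,t)² dy ≤ C/y₀. Then there is a constant C' (depending only on M and C) such that for every t₀ ∈ ℝ, ∫_{t∈ℝ} ⟨t−t₀⟩^{-4/5} ∫_{y∈ℝ} v(y,t)² dy dt ≤ C' < ∞. -/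
/-!
Fix `t` and put `s = t - t₀`, `R = ⟨s⟩^{2/5}`. Outside `[-R, R]` the decay assumption gives
`∫ v² ≤ C / R`, so after multiplication by `⟨s⟩^{-4/5}` the far part is `C ⟨s⟩^{-6/5}`,
integrable in time. Inside, `⟨s⟩^{-4/5} = R⁻²` is at most a multiple of `⟨n⟩^{-2}` on every unit
interval `[n, n + 1]` meeting `[-R, R]`, so the near part is bounded by a summable combination of
the unit-interval integrals, each of which the local smoothing bound controls in time.
-/

open MeasureTheory Set
open scoped ENNReal

-- `n + 1/2` is the midpoint of `[n, n + 1]`: it never vanishes, and it lies in `[-2R, 2R]`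
-- whenever the interval meets `[-R, R]` with `R ≥ 1`.
noncomputable def unitIntervalWeight (n : ℤ) : ℝ := 4 / ((n : ℝ) + 1 / 2) ^ 2

lemma unitIntervalWeight_nonneg (n : ℤ) : 0 ≤ unitIntervalWeight n := by
  unfold unitIntervalWeight
  positivity

lemma summable_unitIntervalWeight : Summable unitIntervalWeight := by
  refine (((Real.summable_one_div_int_add_rpow (1 / 2) 2).2 one_lt_two).mul_left 4).congr
    fun n => ?_
  rw [Real.rpow_two, sq_abs, unitIntervalWeight, mul_one_div]

lemma inv_sq_le_unitIntervalWeight {A y : ℝ} {n : ℤ} (hA : 1 ≤ A) (hyA : |y| ≤ A)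
    (hyn : y ∈ Icc (n : ℝ) (n + 1)) : (A ^ 2)⁻¹ ≤ unitIntervalWeight n := by
  have hmid : ((n : ℝ) + 1 / 2) ≠ 0 := by
    intro h
    have : 2 * n + 1 = 0 := by exact_mod_cast (by linarith : 2 * (n : ℝ) + 1 = 0)
    omega
  have hle : |(n : ℝ) + 1 / 2| ≤ 2 * A := by
    rw [abs_le] at hyA ⊢
    constructor <;> linarith [hyn.1, hyn.2]
  calc (A ^ 2)⁻¹ = 4 / (2 * A) ^ 2 := by field_simp; ring
    _ ≤ 4 / ((n : ℝ) + 1 / 2) ^ 2 := by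
      refine div_le_div_of_nonneg_left (by norm_num) (by positivity) ?_
      simpa only [sq_abs] using pow_le_pow_left₀ (abs_nonneg _) hle 2

section SpatialSplitting

variable (μ : Measure ℝ) (f : ℝ → ℝ≥0∞)

lemma ofReal_inv_sq_mul_setLIntegral_Icc_le {A : ℝ} (hA : 1 ≤ A) :
    ENNReal.ofReal (A ^ 2)⁻¹ * ∫⁻ y in Icc (-A) A, f y ∂μ ≤
      ∑' n : ℤ, ENNReal.ofReal (unitIntervalWeight n) * ∫⁻ y in Icc (n : ℝ) (n + 1), f y ∂μ := by
  have hcover : Icc (-A) A = ⋃ n : ℤ, Icc (-A) A ∩ Icc (n : ℝ) (n + 1) := by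
    rw [← inter_iUnion, iUnion_Icc_intCast, inter_univ]
  rw [← lintegral_const_mul' _ _ ENNReal.ofReal_ne_top, hcover]
  refine (lintegral_iUnion_le _ _).trans (ENNReal.tsum_le_tsum fun n => ?_)
  rw [← lintegral_const_mul' _ _ ENNReal.ofReal_ne_top]
  refine (setLIntegral_mono' (measurableSet_Icc.inter measurableSet_Icc) fun y hy => ?_).trans
    (lintegral_mono_set inter_subset_right)
  exact mul_le_mul_left (ENNReal.ofReal_le_ofReal
    (inv_sq_le_unitIntervalWeight hA (abs_le.2 hy.1) hy.2)) _

lemma lintegral_le_setLIntegral_Icc_add_tail (A : ℝ) :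
    ∫⁻ y, f y ∂μ ≤ ∫⁻ y in Icc (-A) A, f y ∂μ + ∫⁻ y in {y | A ≤ |y|}, f y ∂μ := by
  rw [← setLIntegral_univ]
  refine (lintegral_mono_set fun y _ => ?_).trans (lintegral_union_le _ _ _)
  rcases le_total |y| A with hy | hy
  · exact Or.inl (abs_le.1 hy)
  · exact Or.inr hy

lemma ofReal_inv_sq_mul_lintegral_le {C A : ℝ} (hA : 1 ≤ A)
    (htail : ∫⁻ y in {y | A ≤ |y|}, f y ∂μ ≤ ENNReal.ofReal (C / A)) :
    ENNReal.ofReal (A ^ 2)⁻¹ * ∫⁻ y, f y ∂μ ≤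
      (∑' n : ℤ, ENNReal.ofReal (unitIntervalWeight n) * ∫⁻ y in Icc (n : ℝ) (n + 1), f y ∂μ) +
        ENNReal.ofReal (C / A ^ 3) := by
  have hfar : ENNReal.ofReal (A ^ 2)⁻¹ * ENNReal.ofReal (C / A) = ENNReal.ofReal (C / A ^ 3) := by
    rw [← ENNReal.ofReal_mul (by positivity)]
    congr 1
    field_simp
  calc ENNReal.ofReal (A ^ 2)⁻¹ * ∫⁻ y, f y ∂μ
      ≤ ENNReal.ofReal (A ^ 2)⁻¹ * (∫⁻ y in Icc (-A) A, f y ∂μ + ENNReal.ofReal (C / A)) :=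
        mul_le_mul_right ((lintegral_le_setLIntegral_Icc_add_tail μ f A).trans
          (add_le_add_right htail _)) _
    _ ≤ _ := by
        rw [mul_add, hfar]
        exact add_le_add_left (ofReal_inv_sq_mul_setLIntegral_Icc_le μ f hA) _

lemma ofReal_one_add_sq_rpow_mul_lintegral_le {C r : ℝ} (hr : 0 ≤ r)
    (hdecay : ∀ y₀ : ℝ, 1 ≤ y₀ → ∫⁻ y in {y | y₀ ≤ |y|}, f y ∂μ ≤ ENNReal.ofReal (C / y₀))
    (s : ℝ) :
    ENNReal.ofReal ((1 + s ^ 2) ^ (-(2 * r))) * ∫⁻ y, f y ∂μ ≤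
      (∑' n : ℤ, ENNReal.ofReal (unitIntervalWeight n) * ∫⁻ y in Icc (n : ℝ) (n + 1), f y ∂μ) +
        ENNReal.ofReal (C * (1 + s ^ 2) ^ (-(3 * r))) := by
  have hs : 0 ≤ 1 + s ^ 2 := by positivity
  have hA : 1 ≤ (1 + s ^ 2) ^ r := Real.one_le_rpow (by nlinarith) hr
  have hpow (k : ℕ) : (1 + s ^ 2) ^ (-(k * r)) = (((1 + s ^ 2) ^ r) ^ k)⁻¹ := by
    rw [Real.rpow_neg hs, mul_comm, Real.rpow_mul_natCast hs]
  rw [show (2 : ℝ) = (2 : ℕ) by norm_num, show (3 : ℝ) = (3 : ℕ) by norm_num, hpow, hpow,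
    ← div_eq_mul_inv]
  exact ofReal_inv_sq_mul_lintegral_le μ f hA (hdecay _ hA)

end SpatialSplitting

lemma integrable_one_add_sq_rpow_neg {p : ℝ} (hp : 1 / 2 < p) :
    Integrable fun s : ℝ => (1 + s ^ 2) ^ (-p) := by
  have h := integrable_rpow_neg_one_add_norm_sq (E := ℝ) (μ := volume) (r := 2 * p)
    (by rw [Module.finrank_self, Nat.cast_one]; linarith)
  simpa only [Real.norm_eq_abs, sq_abs, neg_div, mul_div_cancel_left₀ p two_ne_zero] using h

lemma lintegral_ofReal_mul_one_add_sub_sq_rpow_neg {C p : ℝ} (hC : 0 ≤ C) (hp : 1 / 2 < p)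
    (t₀ : ℝ) :
    ∫⁻ t, ENNReal.ofReal (C * (1 + (t - t₀) ^ 2) ^ (-p)) =
      ENNReal.ofReal (C * ∫ s, (1 + s ^ 2) ^ (-p)) := by
  have hint := ((integrable_one_add_sq_rpow_neg hp).comp_sub_right t₀).const_mul C
  rw [← ofReal_integral_eq_lintegral_ofReal hint
    (Filter.Eventually.of_forall fun t => by positivity), integral_const_mul,
    integral_sub_right_eq_self (fun s => (1 + s ^ 2) ^ (-p)) t₀]

lemma lintegral_tsum_mul_le {α ι : Type*} [MeasurableSpace α] [Countable ι] {μ : Measure α}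
    {F : ι → α → ℝ≥0∞} (hF : ∀ i, AEMeasurable (F i) μ) (w : ι → ℝ≥0∞) {M : ℝ≥0∞}
    (hM : ∀ i, ∫⁻ x, F i x ∂μ ≤ M) :
    ∫⁻ x, ∑' i, w i * F i x ∂μ ≤ (∑' i, w i) * M := by
  rw [lintegral_tsum fun i => (hF i).const_mul _, ← ENNReal.tsum_mul_right]
  exact ENNReal.tsum_le_tsum fun i => (lintegral_const_mul'' _ (hF i)).trans_le
    (mul_le_mul_right (hM i) _)

lemma measurable_lintegral_ofReal_sq {v : ℝ → ℝ → ℝ} (hv : Measurable (Function.uncurry v))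
    (ν : Measure ℝ) [SFinite ν] :
    Measurable fun t => ∫⁻ y, ENNReal.ofReal (v y t ^ 2) ∂ν :=
  (((hv.comp measurable_swap).pow_const 2).ennreal_ofReal).lintegral_prod_right'

/-- **Tempered time-decay bound from local smoothing and uniform spatial decay.**
If `v(y,t)` satisfies (i) a uniform bound `M` on `∫_t ∫_{y∈I} v² ` over all unit intervals
`I`, and (ii) uniform-in-time spatial decay `∫_{|y|≥y₀} v(y,t)² dy ≤ C/y₀` for `y₀ ≥ 1`,
then there is `C'` (depending only on `M` and `C`) such that for every `t₀`,
`∫_t ⟨t−t₀⟩^{−4/5} ∫_y v(y,t)² dy dt ≤ C' < ∞`. -/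
theorem tempered_time_decay (M C : ℝ) (hM : 0 ≤ M) (hC : 0 < C) :
    ∃ C' : ℝ, ∀ v : ℝ → ℝ → ℝ,
      Measurable (Function.uncurry v) →
      -- (i) local smoothing bound over unit intervals
      (∀ a : ℝ, (∫⁻ t : ℝ, ∫⁻ y in Set.Icc a (a + 1), ENNReal.ofReal ((v y t)^2))
        ≤ ENNReal.ofReal M) →
      -- (ii) uniform-in-time spatial decay
      (∀ y₀ : ℝ, 1 ≤ y₀ → ∀ t : ℝ,
        (∫⁻ y in {y : ℝ | y₀ ≤ |y|}, ENNReal.ofReal ((v y t)^2))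
          ≤ ENNReal.ofReal (C / y₀)) →
      ∀ t₀ : ℝ,
        (∫⁻ t : ℝ, ENNReal.ofReal ((1 + (t - t₀)^2) ^ (-(2:ℝ)/5))
            * ∫⁻ y : ℝ, ENNReal.ofReal ((v y t)^2))
          ≤ ENNReal.ofReal C' := by
  refine ⟨(∑' n, unitIntervalWeight n) * M + C * ∫ s : ℝ, (1 + s ^ 2) ^ (-(3 / 5 : ℝ)), ?_⟩
  intro v hv hlocal hdecay t₀
  set F : ℤ → ℝ → ℝ≥0∞ := fun n t => ∫⁻ y in Icc (n : ℝ) (n + 1), ENNReal.ofReal (v y t ^ 2)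
  have hpointwise (t : ℝ) :
      ENNReal.ofReal ((1 + (t - t₀) ^ 2) ^ (-(2 : ℝ) / 5)) * ∫⁻ y, ENNReal.ofReal (v y t ^ 2) ≤
        (∑' n, ENNReal.ofReal (unitIntervalWeight n) * F n t) +
          ENNReal.ofReal (C * (1 + (t - t₀) ^ 2) ^ (-(3 / 5 : ℝ))) := by
    have h := ofReal_one_add_sq_rpow_mul_lintegral_le volume _ (r := 1 / 5) (by norm_num)
      (fun y₀ hy₀ => hdecay y₀ hy₀ t) (t - t₀)
    norm_num at h ⊢
    exact h
  have hkernel : Measurable fun t => ENNReal.ofReal (C * (1 + (t - t₀) ^ 2) ^ (-(3 / 5 : ℝ))) := by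
    fun_prop
  calc _ ≤ (∫⁻ t, ∑' n, ENNReal.ofReal (unitIntervalWeight n) * F n t) +
        ∫⁻ t, ENNReal.ofReal (C * (1 + (t - t₀) ^ 2) ^ (-(3 / 5 : ℝ))) :=
        (lintegral_mono hpointwise).trans_eq (lintegral_add_right _ hkernel)
    _ ≤ (∑' n, ENNReal.ofReal (unitIntervalWeight n)) * ENNReal.ofReal M +
        ENNReal.ofReal (C * ∫ s : ℝ, (1 + s ^ 2) ^ (-(3 / 5 : ℝ))) := by
        gcongr
        · exact lintegral_tsum_mul_le
            (fun n => (measurable_lintegral_ofReal_sq hv _).aemeasurable) _ fun n => hlocal n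
        · exact (lintegral_ofReal_mul_one_add_sub_sq_rpow_neg hC.le (by norm_num) t₀).le
    _ = _ := by
        rw [← ENNReal.ofReal_tsum_of_nonneg unitIntervalWeight_nonneg summable_unitIntervalWeight,
          ← ENNReal.ofReal_mul (tsum_nonneg unitIntervalWeight_nonneg), ← ENNReal.ofReal_add
            (mul_nonneg (tsum_nonneg unitIntervalWeight_nonneg) hM)
            (mul_nonneg hC.le (integral_nonneg fun s => by positivity))]
end
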